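/- Let A and B be ω-categorical homogeneous relational structures in finite relational languages with countably infinite domains Ω and Ω′, and assume the canonisation property (which holds when A and B are Ramsey structures): for every function f: Ω → Ω′, the closure of {β∘f∘α : α ∈ Aut(A), β ∈ Aut(B)} in the topology of pointwise convergence contains an (A,B)-canonical function, and symmetrically for every function g: Ω′ → Ω the closure of {α∘g∘β : α ∈ Aut(A), β ∈ Aut(B)} contains a (B,A)-canonical function. Let C and D be first-order reducts of A and B in the same relational signature, with C optimally presented over A and D optimally presented over B. If C and D are homomorphically equivalent, then there exists a bijection θ: Ω → Ω′ that is an isomorphism from C onto D and a fo-bi-definition of A and B (θ and θ⁻¹ map sets first-order definable without parameters onto sets first-order definable without parameters). -/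

import Mathlib

/-!
Canonisation turns the homomorphisms `C → D` and `D → C` into canonical maps `f` and `g`, which
are still homomorphisms because the set of homomorphisms is closed and contains every
`β ∘ h ∘ α`. The canonical endomorphism `g ∘ f` of `C` induces a self-map of the finite set of
`Aut(A)`-orbits of `n`-tuples, which is onto because `C` is optimally presented; it is therefore
a permutation, so some power of `g ∘ f` preserves every orbit. Hence `f` reflects `Aut(A)`-orbits
and the relations of `C`, and, `D` being optimally presented, the range of `f` meets every
`Aut(B)`-orbit. A back-and-forth argument now produces a bijection `θ` that agrees on each finite
tuple with an `Aut(B)`-translate of `f`. Such a `θ` is an isomorphism `C → D` matching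
`Aut(A)`-orbits with `Aut(B)`-orbits, and in a homogeneous ω-categorical structure in a finite
relational language the definable sets are exactly the unions of orbits.
-/

/-- The topology of pointwise convergence on functions `α → β`
(product topology with `β` discrete). -/
def FnTop (α β : Type*) : TopologicalSpace (α → β) :=
  @Pi.topologicalSpace α (fun _ => β) (fun _ => ⊥)

/-- The coordinatewise action of a permutation on tuples. -/
def tAct {Ω : Type*} (g : Equiv.Perm Ω) {n : ℕ} (u : Fin n → Ω) : Fin n → Ω :=
  fun i => g (u i)

/-- The action of a permutation on sets of tuples. -/
def sAct {Ω : Type*} (g : Equiv.Perm Ω) {n : ℕ} (c : Set (Fin n → Ω)) : Set (Fin n → Ω) :=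
  tAct g '' c

/-- A set of permutations is oligomorphic if for every `n` its coordinatewise
action on `n`-tuples has finitely many orbits. -/
def Oligo {Ω : Type*} (G : Set (Equiv.Perm Ω)) : Prop :=
  ∀ n : ℕ, Set.Finite {o : Set (Fin n → Ω) | ∃ t : Fin n → Ω, o = {s | ∃ g ∈ G, s = tAct g t}}

/-- `G` acts without algebraicity on `Ω`: if the orbit of `a` under the pointwise
stabiliser of a finite tuple `y` is finite, then `a` is an entry of `y`. -/
def NoAlg {Ω : Type*} (G : Set (Equiv.Perm Ω)) : Prop :=
  ∀ (m : ℕ) (y : Fin m → Ω) (a : Ω),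
    Set.Finite {b : Ω | ∃ g ∈ G, (∀ i, g (y i) = y i) ∧ b = g a} → ∃ i, a = y i

/-- `G` is topologically closed in the space of permutations with the topology of
pointwise convergence. -/
def TopClosedPerm {Ω : Type*} (G : Set (Equiv.Perm Ω)) : Prop :=
  @IsClosed (Ω → Ω) (FnTop Ω Ω) {f | ∃ g ∈ G, f = ⇑g}

/-- The `r`-equivalence class of a tuple `u ∈ U`. -/
def cls {Ω : Type*} {n : ℕ} (U : Set (Fin n → Ω))
    (r : (Fin n → Ω) → (Fin n → Ω) → Prop) (u : Fin n → Ω) : Set (Fin n → Ω) :=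
  {v ∈ U | r u v}

/-- The quotient `B = U/∼`, realised as the set of equivalence classes. -/
def classes {Ω : Type*} {n : ℕ} (U : Set (Fin n → Ω))
    (r : (Fin n → Ω) → (Fin n → Ω) → Prop) : Set (Set (Fin n → Ω)) :=
  {c | ∃ u ∈ U, c = cls U r u}

/-- `a` entangles the class `c` if `a` is an entry of every tuple in `c`. -/
def Entangles {Ω : Type*} {n : ℕ} (a : Ω) (c : Set (Fin n → Ω)) : Prop :=
  ∀ v ∈ c, ∃ i, v i = a

/-- `a` strongly entangles `c ∈ B` if it entangles `c` and no other element of `B`. -/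
def StronglyEntangles {Ω : Type*} {n : ℕ} (B : Set (Set (Fin n → Ω))) (a : Ω)
    (c : Set (Fin n → Ω)) : Prop :=
  Entangles a c ∧ ∀ c' ∈ B, Entangles a c' → c' = c

/-- `a` is algebraic over `c`: the orbit of `a` under the stabiliser `G_c` is finite. -/
def AlgebraicOver {Ω : Type*} {n : ℕ} (G : Set (Equiv.Perm Ω)) (a : Ω)
    (c : Set (Fin n → Ω)) : Prop :=
  Set.Finite {b : Ω | ∃ g ∈ G, sAct g c = c ∧ b = g a}

/-- `B` is dense: for every `a ∈ Ω` there are `c₁,…,c_k ∈ B` whose joint stabiliser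
is contained in the stabiliser of `a`. -/
def DenseClasses {Ω : Type*} {n : ℕ} (G : Set (Equiv.Perm Ω))
    (B : Set (Set (Fin n → Ω))) : Prop :=
  ∀ a : Ω, ∃ (k : ℕ) (cc : Fin k → Set (Fin n → Ω)),
    (∀ i, cc i ∈ B) ∧ ∀ g ∈ G, (∀ i, sAct g (cc i) = cc i) → g a = a

/-- The induced action of `G` on `B` is without algebraicity. -/
def NoAlgOn {Ω : Type*} {n : ℕ} (G : Set (Equiv.Perm Ω))
    (B : Set (Set (Fin n → Ω))) : Prop :=
  ∀ (m : ℕ) (cc : Fin m → Set (Fin n → Ω)) (c : Set (Fin n → Ω)),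
    (∀ i, cc i ∈ B) → c ∈ B →
    Set.Finite {c' | ∃ g ∈ G, (∀ i, sAct g (cc i) = cc i) ∧ c' = sAct g c} →
    ∃ i, c = cc i

open FirstOrder Language Structure in
/-- A permutation is an automorphism of the `L`-structure `Ω` if it preserves
every relation and its complement. -/
def IsAutPerm (L : FirstOrder.Language) (Ω : Type*) [L.Structure Ω] (g : Equiv.Perm Ω) : Prop :=
  ∀ (n : ℕ) (R : L.Relations n) (t : Fin n → Ω), RelMap R (⇑g ∘ t) ↔ RelMap R t

open FirstOrder Language Structure in
/-- The automorphism group of the `L`-structure `Ω`, as a subgroup of `Equiv.Perm Ω`. -/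
def autGroup (L : FirstOrder.Language) (Ω : Type*) [L.Structure Ω] : Subgroup (Equiv.Perm Ω) where
  carrier := {g | IsAutPerm L Ω g}
  one_mem' := by
    intro n R t
    exact Iff.rfl
  mul_mem' := by
    intro a b ha hb n R t
    have h1 : ⇑(a * b) ∘ t = ⇑a ∘ (⇑b ∘ t) := by
      ext i; simp [Equiv.Perm.mul_apply]
    rw [h1]
    exact (ha n R (⇑b ∘ t)).trans (hb n R t)
  inv_mem' := by
    intro a ha n R t
    have h := ha n R (⇑a⁻¹ ∘ t)
    have h2 : ⇑a ∘ (⇑a⁻¹ ∘ t) = t := by ext i; simp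
    rw [h2] at h
    exact h.symm

/-- The topology of pointwise convergence on the automorphism group. -/
def autTop (L : FirstOrder.Language) (Ω : Type*) [L.Structure Ω] :
    TopologicalSpace (autGroup L Ω) :=
  TopologicalSpace.induced (fun g => ((g : Equiv.Perm Ω) : Ω → Ω)) (FnTop Ω Ω)

/-- A subset of `Ω^n` is first-order definable without parameters in the
`L`-structure `Ω`. -/
def FoDef (L : FirstOrder.Language) (Ω : Type*) [L.Structure Ω] {n : ℕ}
    (s : Set (Fin n → Ω)) : Prop :=
  ∃ φ : L.Formula (Fin n), s = {t | φ.Realize t}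

/-- `t'` lies in the `G`-orbit of `t`. -/
def SameOrb {Ω : Type*} (G : Set (Equiv.Perm Ω)) {m : ℕ} (t t' : Fin m → Ω) : Prop :=
  ∃ g ∈ G, t' = tAct g t

/-- `f` is canonical from the structure with automorphism set `G` to the structure
with automorphism set `H`: it maps `G`-orbits of tuples into `H`-orbits. -/
def Canonical {Ω Ω' : Type*} (G : Set (Equiv.Perm Ω)) (H : Set (Equiv.Perm Ω'))
    (f : Ω → Ω') : Prop :=
  ∀ (m : ℕ) (t t' : Fin m → Ω), SameOrb G t t' →
    SameOrb H (fun i => f (t i)) (fun i => f (t' i))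

open FirstOrder Language Structure in
/-- A structure is homogeneous if every isomorphism between finite induced
substructures extends to an automorphism. -/
def Homog (L : FirstOrder.Language) (Ω : Type*) [L.Structure Ω] : Prop :=
  ∀ (s : Finset Ω) (f : Ω → Ω), Set.InjOn f ↑s →
    (∀ (n : ℕ) (R : L.Relations n) (t : Fin n → Ω), (∀ i, t i ∈ s) →
      (RelMap R t ↔ RelMap R (f ∘ t))) →
    ∃ g : Equiv.Perm Ω, IsAutPerm L Ω g ∧ ∀ x ∈ s, g x = f x

open FirstOrder Language Structure in
/-- Interpretation of a relation symbol in an explicitly given structure. -/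
def relI {τ : FirstOrder.Language} {Ω : Type*} (S : τ.Structure Ω) {m : ℕ}
    (R : τ.Relations m) (t : Fin m → Ω) : Prop :=
  @RelMap τ Ω S m R t

section Orbits

variable {Ω : Type*} (G : Subgroup (Equiv.Perm Ω))

theorem sameOrb_iff_mem_orbit {n : ℕ} {t s : Fin n → Ω} :
    SameOrb (G : Set (Equiv.Perm Ω)) t s ↔ s ∈ MulAction.orbit G t := by
  constructor
  · rintro ⟨g, hg, rfl⟩
    exact ⟨⟨g, hg⟩, rfl⟩
  · rintro ⟨g, rfl⟩
    exact ⟨g, g.2, rfl⟩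

theorem sameOrb_refl {n : ℕ} (t : Fin n → Ω) : SameOrb (G : Set (Equiv.Perm Ω)) t t :=
  (sameOrb_iff_mem_orbit G).2 (MulAction.mem_orbit_self t)

variable {G}

theorem SameOrb.symm {n : ℕ} {t s : Fin n → Ω} (h : SameOrb (G : Set (Equiv.Perm Ω)) t s) :
    SameOrb (G : Set (Equiv.Perm Ω)) s t :=
  (sameOrb_iff_mem_orbit G).2 (MulAction.mem_orbit_symm.1 ((sameOrb_iff_mem_orbit G).1 h))

theorem SameOrb.trans {n : ℕ} {t s u : Fin n → Ω} (h : SameOrb (G : Set (Equiv.Perm Ω)) t s)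
    (h' : SameOrb (G : Set (Equiv.Perm Ω)) s u) : SameOrb (G : Set (Equiv.Perm Ω)) t u := by
  obtain ⟨g, hg, rfl⟩ := h
  obtain ⟨g', hg', rfl⟩ := h'
  exact ⟨g' * g, G.mul_mem hg' hg, rfl⟩

theorem orbitRel_iff_sameOrb {n : ℕ} {t s : Fin n → Ω} :
    MulAction.orbitRel G (Fin n → Ω) s t ↔ SameOrb (G : Set (Equiv.Perm Ω)) t s :=
  MulAction.orbitRel_apply.trans (sameOrb_iff_mem_orbit G).symm

theorem finite_orbitRel_quotient (hG : Oligo (G : Set (Equiv.Perm Ω))) (n : ℕ) :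
    Finite (MulAction.orbitRel.Quotient G (Fin n → Ω)) := by
  have := (hG n).to_subtype
  refine Finite.of_injective (fun q => (⟨q.orbit, q.out, ?_⟩ :
    {o : Set (Fin n → Ω) | ∃ t, o = {s | ∃ g ∈ (G : Set (Equiv.Perm Ω)), s = tAct g t}}))
    fun q q' h => MulAction.orbitRel.Quotient.orbit_injective (congrArg Subtype.val h)
  rw [MulAction.orbitRel.Quotient.orbit_eq_orbit_out _ Quotient.out_eq']
  ext s
  exact (sameOrb_iff_mem_orbit G).symm

end Orbits

theorem Setoid.exists_iterate_rel_self {X : Type*} {r : Setoid X} [Finite (Quotient r)]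
    {E : X → X} (hE : ∀ x y, r x y → r (E x) (E y)) (hsurj : ∀ x, ∃ y, r x (E y)) :
    ∃ k, 0 < k ∧ ∀ x, r (E^[k] x) x := by
  let F : Quotient r → Quotient r := Quotient.map E hE
  have hF : Function.Bijective F := by
    refine (Finite.injective_iff_bijective).1 (Finite.injective_iff_surjective.2 ?_)
    refine Quotient.ind fun x => ?_
    obtain ⟨y, hy⟩ := hsurj x
    exact ⟨⟦y⟧, Quotient.sound (Setoid.symm hy)⟩
  let σ := Equiv.ofBijective F hF
  have hσ : σ ^ orderOf σ = 1 := pow_orderOf_eq_one σ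
  have hsemi : Function.Semiconj (Quotient.mk r) E F := fun _ => rfl
  refine ⟨orderOf σ, orderOf_pos σ, fun x => Quotient.exact ?_⟩
  rw [hsemi.iterate_right, ← Equiv.coe_ofBijective F hF, ← Equiv.Perm.coe_pow, hσ]
  rfl

theorem Setoid.rel_of_rel_map {X : Type*} {r : Setoid X} [Finite (Quotient r)]
    {E : X → X} (hE : ∀ x y, r x y → r (E x) (E y)) (hsurj : ∀ x, ∃ y, r x (E y))
    {x y : X} (h : r (E x) (E y)) : r x y := by
  obtain ⟨k, hk, hkE⟩ := Setoid.exists_iterate_rel_self hE hsurj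
  obtain ⟨j, rfl⟩ := Nat.exists_eq_add_one_of_ne_zero hk.ne'
  have hj : r (E^[j] (E x)) (E^[j] (E y)) := by
    simpa only [Prod.map_iterate, Prod.map_fst, Prod.map_snd] using
      Function.Iterate.rec (fun z : X × X => r z.1 z.2) (a := (E x, E y)) h
        (f := Prod.map E E) (fun z hz => hE _ _ hz) j
  exact r.trans (r.symm (hkE x)) (r.trans hj (hkE y))

theorem Setoid.pred_of_pred_map {X : Type*} {r : Setoid X} [Finite (Quotient r)]
    {E : X → X} (hE : ∀ x y, r x y → r (E x) (E y)) (hsurj : ∀ x, ∃ y, r x (E y))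
    (P : X → Prop) (hP : ∀ x y, r x y → P x → P y) (hPE : ∀ x, P x → P (E x)) {x : X}
    (h : P (E x)) : P x := by
  obtain ⟨k, hk, hkE⟩ := Setoid.exists_iterate_rel_self hE hsurj
  obtain ⟨j, rfl⟩ := Nat.exists_eq_add_one_of_ne_zero hk.ne'
  exact hP _ _ (hkE x) (Function.Iterate.rec P h hPE j)

def RangeMeetsOrbits {Ω Ω' : Type*} (H : Set (Equiv.Perm Ω')) (f : Ω → Ω') : Prop :=
  ∀ (m : ℕ) (t : Fin m → Ω'), ∃ s : Fin m → Ω, SameOrb H t (fun i => f (s i))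

theorem RangeMeetsOrbits.of_comp {Ω Ω' Ω'' : Type*} {H : Set (Equiv.Perm Ω'')}
    {f : Ω' → Ω''} {g : Ω → Ω'} (h : RangeMeetsOrbits H (f ∘ g)) :
    RangeMeetsOrbits H f := fun m t =>
  have ⟨s, hs⟩ := h m t
  ⟨g ∘ s, hs⟩

theorem Canonical.comp {Ω Ω' Ω'' : Type*} {G : Set (Equiv.Perm Ω)} {H : Set (Equiv.Perm Ω')}
    {K : Set (Equiv.Perm Ω'')} {g : Ω' → Ω''} {f : Ω → Ω'} (hg : Canonical H K g)
    (hf : Canonical G H f) : Canonical G K (g ∘ f) := fun m t t' h => hg m _ _ (hf m t t' h)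

section CanonicalEndomorphism

variable {Ω : Type*} {G : Subgroup (Equiv.Perm Ω)} {e : Ω → Ω} {n : ℕ}

theorem Canonical.orbitRel_comp (he : Canonical (G : Set (Equiv.Perm Ω)) G e)
    {x y : Fin n → Ω} (h : MulAction.orbitRel G (Fin n → Ω) x y) :
    MulAction.orbitRel G (Fin n → Ω) (e ∘ x) (e ∘ y) :=
  orbitRel_iff_sameOrb.2 (he n _ _ (orbitRel_iff_sameOrb.1 h))

theorem RangeMeetsOrbits.exists_orbitRel (hrange : RangeMeetsOrbits (G : Set (Equiv.Perm Ω)) e)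
    (x : Fin n → Ω) : ∃ y, MulAction.orbitRel G (Fin n → Ω) x (e ∘ y) :=
  have ⟨y, hy⟩ := hrange n x
  ⟨y, orbitRel_iff_sameOrb.2 (SameOrb.symm hy)⟩

theorem Canonical.sameOrb_of_sameOrb_comp (hG : Oligo (G : Set (Equiv.Perm Ω)))
    (he : Canonical (G : Set (Equiv.Perm Ω)) G e) (hrange : RangeMeetsOrbits (G : Set _) e)
    {t s : Fin n → Ω} (h : SameOrb (G : Set (Equiv.Perm Ω)) (e ∘ t) (e ∘ s)) :
    SameOrb (G : Set (Equiv.Perm Ω)) t s :=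
  have := finite_orbitRel_quotient hG n
  orbitRel_iff_sameOrb.1 (Setoid.rel_of_rel_map (fun _ _ => he.orbitRel_comp)
    hrange.exists_orbitRel (orbitRel_iff_sameOrb.2 h))

theorem Canonical.pred_of_pred_comp (hG : Oligo (G : Set (Equiv.Perm Ω)))
    (he : Canonical (G : Set (Equiv.Perm Ω)) G e) (hrange : RangeMeetsOrbits (G : Set _) e)
    (P : (Fin n → Ω) → Prop)
    (hP : ∀ t s, SameOrb (G : Set (Equiv.Perm Ω)) t s → P t → P s)
    (hPe : ∀ t, P t → P (e ∘ t)) {t : Fin n → Ω} (h : P (e ∘ t)) : P t :=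
  have := finite_orbitRel_quotient hG n
  Setoid.pred_of_pred_map (fun _ _ => he.orbitRel_comp) hrange.exists_orbitRel P
    (fun x y hxy => hP x y (SameOrb.symm (orbitRel_iff_sameOrb.1 hxy))) hPe h

end CanonicalEndomorphism

section Homomorphisms

variable {τ : FirstOrder.Language} {Ω Ω' Ω'' : Type*}

def IsRelHom (S : τ.Structure Ω) (S' : τ.Structure Ω') (h : Ω → Ω') : Prop :=
  ∀ (m : ℕ) (R : τ.Relations m) (t : Fin m → Ω), relI S R t → relI S' R (fun i => h (t i))

theorem IsRelHom.comp {S : τ.Structure Ω} {S' : τ.Structure Ω'} {S'' : τ.Structure Ω''}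
    {h' : Ω' → Ω''} {h : Ω → Ω'} (hh' : IsRelHom S' S'' h') (hh : IsRelHom S S' h) :
    IsRelHom S S'' (h' ∘ h) := fun m R t ht => hh' m R _ (hh m R t ht)

theorem exists_eqOn_of_mem_closure {S : Set (Ω → Ω')} {f : Ω → Ω'}
    (hf : f ∈ @closure _ (FnTop Ω Ω') S) {m : ℕ} (t : Fin m → Ω) :
    ∃ k ∈ S, ∀ i, k (t i) = f (t i) := by
  let _ : TopologicalSpace Ω' := ⊥
  have : DiscreteTopology Ω' := ⟨rfl⟩
  have hU : IsOpen {k : Ω → Ω' | ∀ i, k (t i) = f (t i)} := by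
    simp only [Set.ofPred_forall]
    exact isOpen_iInter_of_finite fun i =>
      (continuous_apply (t i) : Continuous fun k : Ω → Ω' => k (t i)).isOpen_preimage {f (t i)}
        (isOpen_discrete _)
  obtain ⟨k, hkU, hkS⟩ := mem_closure_iff.1 hf _ hU fun i => rfl
  exact ⟨k, hkS, hkU⟩

theorem IsRelHom.of_mem_closure {S : τ.Structure Ω} {S' : τ.Structure Ω'} {K : Set (Ω → Ω')}
    (hK : ∀ k ∈ K, IsRelHom S S' k) {f : Ω → Ω'} (hf : f ∈ @closure _ (FnTop Ω Ω') K) :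
    IsRelHom S S' f := fun m R t ht => by
  obtain ⟨k, hk, hkt⟩ := exists_eqOn_of_mem_closure hf t
  simpa only [hkt] using hK k hk m R t ht

def IsPreservedBy (S : τ.Structure Ω) (G : Set (Equiv.Perm Ω)) : Prop :=
  ∀ (m : ℕ) (R : τ.Relations m) (g : Equiv.Perm Ω), g ∈ G →
    ∀ t : Fin m → Ω, relI S R t → relI S R (tAct g t)

theorem IsPreservedBy.isRelHom {S : τ.Structure Ω} {G : Set (Equiv.Perm Ω)}
    (hS : IsPreservedBy S G) {g : Equiv.Perm Ω} (hg : g ∈ G) : IsRelHom S S g :=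
  fun m R t => hS m R g hg t

theorem IsPreservedBy.relI_of_sameOrb {S : τ.Structure Ω} {G : Set (Equiv.Perm Ω)}
    (hS : IsPreservedBy S G) {m : ℕ} {R : τ.Relations m} {t s : Fin m → Ω} (h : SameOrb G t s)
    (ht : relI S R t) : relI S R s := by
  obtain ⟨g, hg, rfl⟩ := h
  exact hS m R g hg t ht

end Homomorphisms

section OrbitEmbedding

variable {Ω Ω' : Type*}

def IsOrbitEmbedding (G : Set (Equiv.Perm Ω)) (H : Set (Equiv.Perm Ω')) (f : Ω → Ω') : Prop :=
  ∀ (m : ℕ) (t s : Fin m → Ω), SameOrb G t s ↔ SameOrb H (f ∘ t) (f ∘ s)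

theorem IsOrbitEmbedding.injective {G : Set (Equiv.Perm Ω)} {H : Subgroup (Equiv.Perm Ω')}
    {f : Ω → Ω'} (hf : IsOrbitEmbedding G H f) : Function.Injective f := by
  intro x y hxy
  obtain ⟨g, -, hg⟩ := (hf 2 ![x, y] ![x, x]).2 (by
    convert sameOrb_refl H (f ∘ ![x, y]) using 1
    ext i; fin_cases i <;> simp [hxy])
  have h0 : x = g x := congrFun hg 0
  have h1 : x = g y := congrFun hg 1
  exact g.injective (h0.symm.trans h1)

theorem IsOrbitEmbedding.of_sameOrb {G : Set (Equiv.Perm Ω)} {H : Subgroup (Equiv.Perm Ω')}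
    {f θ : Ω → Ω'} (hf : IsOrbitEmbedding G H f)
    (hθ : ∀ (n : ℕ) (x : Fin n → Ω),
      SameOrb (H : Set (Equiv.Perm Ω')) (f ∘ x) (θ ∘ x)) :
    IsOrbitEmbedding G H θ := fun m t s =>
  (hf m t s).trans ⟨fun h => ((hθ m t).symm.trans h).trans (hθ m s),
    fun h => ((hθ m t).trans h).trans (hθ m s).symm⟩

theorem IsOrbitEmbedding.symm {G : Set (Equiv.Perm Ω)} {H : Set (Equiv.Perm Ω')} {θ : Ω ≃ Ω'}
    (hθ : IsOrbitEmbedding G H θ) : IsOrbitEmbedding H G θ.symm := fun m t s => by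
  rw [hθ m]
  simp [Function.comp_def]

def OrbitInvariant (G : Set (Equiv.Perm Ω)) {n : ℕ} (s : Set (Fin n → Ω)) : Prop :=
  ∀ u v, SameOrb G u v → u ∈ s → v ∈ s

theorem IsOrbitEmbedding.orbitInvariant_image {G : Set (Equiv.Perm Ω)}
    {H : Set (Equiv.Perm Ω')} {θ : Ω ≃ Ω'} (hθ : IsOrbitEmbedding G H θ) {n : ℕ}
    {s : Set (Fin n → Ω)} (hs : OrbitInvariant G s) :
    OrbitInvariant H ((fun t => θ ∘ t) '' s) := by
  rintro _ v huv ⟨u, hu, rfl⟩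
  refine ⟨θ.symm ∘ v, hs _ _ ((hθ n u _).2 ?_) hu, by simp [Function.comp_def]⟩
  simpa [Function.comp_def] using huv

end OrbitEmbedding

section BackAndForth

variable {Ω Ω' : Type*} {G : Subgroup (Equiv.Perm Ω)} {H : Subgroup (Equiv.Perm Ω')}
  {f : Ω → Ω'}

theorem IsOrbitEmbedding.exists_snoc_sameOrb (hf : IsOrbitEmbedding (G : Set (Equiv.Perm Ω)) H f)
    (hrange : RangeMeetsOrbits (H : Set _) f) {n : ℕ} (x : Fin n → Ω) (b : Ω') :
    ∃ a, SameOrb (H : Set (Equiv.Perm Ω')) (Fin.snoc (f ∘ x) b) (f ∘ Fin.snoc x a) := by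
  obtain ⟨u, hu⟩ := hrange (n + 1) (Fin.snoc (f ∘ x) b)
  have hinit : SameOrb (H : Set (Equiv.Perm Ω')) (f ∘ x) (f ∘ Fin.init u) := by
    obtain ⟨γ, hγ, hγu⟩ := hu
    exact ⟨γ, hγ, funext fun i => by simpa [tAct, Fin.init] using congrFun hγu i.castSucc⟩
  obtain ⟨δ, hδ, hδx⟩ := SameOrb.symm ((hf n _ _).2 hinit)
  refine ⟨δ (u (Fin.last n)), hu.trans ((hf (n + 1) u _).1 ⟨δ, hδ, ?_⟩)⟩
  funext i
  refine Fin.lastCases ?_ (fun j => ?_) i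
  · simp [tAct]
  · simpa [tAct, Fin.init] using congrFun hδx j

variable (H f) in
abbrev LocalTranslate : Type _ :=
  {s : Finset (Ω × Ω') // ∃ β ∈ H, ∀ p ∈ s, p.2 = β (f p.1)}

theorem LocalTranslate.fst_eq_iff_snd_eq (hf : Function.Injective f) (s : LocalTranslate H f)
    {p q : Ω × Ω'} (hp : p ∈ s.1) (hq : q ∈ s.1) : p.1 = q.1 ↔ p.2 = q.2 := by
  obtain ⟨β, -, hβ⟩ := s.2
  rw [hβ p hp, hβ q hq, β.injective.eq_iff, hf.eq_iff]

def LocalTranslate.forth (a : Ω) : Order.Cofinal (LocalTranslate H f) where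
  carrier := {s | ∃ b, (a, b) ∈ s.1}
  isCofinal s := by
    classical
    obtain ⟨β, hβ, hs⟩ := s.2
    refine ⟨⟨insert (a, β (f a)) s.1, β, hβ, ?_⟩, ⟨_, Finset.mem_insert_self _ _⟩,
      Finset.subset_insert _ _⟩
    simpa only [Finset.forall_mem_insert, true_and] using hs

def LocalTranslate.back (hf : IsOrbitEmbedding (G : Set (Equiv.Perm Ω)) H f)
    (hrange : RangeMeetsOrbits (H : Set (Equiv.Perm Ω')) f) (b : Ω') :
    Order.Cofinal (LocalTranslate H f) where
  carrier := {s | ∃ a, (a, b) ∈ s.1}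
  isCofinal s := by
    classical
    obtain ⟨β, hβ, hs⟩ := s.2
    let x : Fin s.1.card → Ω := fun i => (s.1.equivFin.symm i).1.1
    obtain ⟨a, γ, hγ, hγx⟩ := hf.exists_snoc_sameOrb hrange x (β⁻¹ b)
    have hlast : f a = γ (β⁻¹ b) := by simpa [tAct] using congrFun hγx (Fin.last _)
    have hfix : ∀ p ∈ s.1, γ⁻¹ (f p.1) = f p.1 := by
      intro p hp
      have hxp : x (s.1.equivFin ⟨p, hp⟩) = p.1 := by simp [x]
      rw [← hxp, Equiv.Perm.inv_eq_iff_eq]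
      simpa [tAct] using congrFun hγx (s.1.equivFin ⟨p, hp⟩).castSucc
    refine ⟨⟨insert (a, b) s.1, β * γ⁻¹, H.mul_mem hβ (H.inv_mem hγ), ?_⟩,
      ⟨a, Finset.mem_insert_self _ _⟩, Finset.subset_insert _ _⟩
    simp only [Finset.forall_mem_insert, Equiv.Perm.mul_apply, hlast]
    refine ⟨by simp, fun p hp => ?_⟩
    rw [hfix p hp, hs p hp]

theorem IsOrbitEmbedding.exists_equiv_sameOrb [Countable Ω] [Countable Ω']
    (hf : IsOrbitEmbedding (G : Set (Equiv.Perm Ω)) H f)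
    (hrange : RangeMeetsOrbits (H : Set (Equiv.Perm Ω')) f) :
    ∃ θ : Ω ≃ Ω', ∀ (n : ℕ) (x : Fin n → Ω),
      SameOrb (H : Set (Equiv.Perm Ω')) (f ∘ x) (θ ∘ x) := by
  have := Encodable.ofCountable (Ω ⊕ Ω')
  let 𝒟 : Ω ⊕ Ω' → Order.Cofinal (LocalTranslate H f) :=
    Sum.elim LocalTranslate.forth (LocalTranslate.back hf hrange)
  let seq := Order.sequenceOfCofinals ⟨∅, 1, H.one_mem, by simp⟩ 𝒟
  have hmono : Monotone seq := Order.sequenceOfCofinals.monotone _ _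
  let Γ : Ω → Ω' → Prop := fun a b => ∃ n, (a, b) ∈ (seq n).1
  have hΓ : ∀ {a a' b b'}, Γ a b → Γ a' b' → (a = a' ↔ b = b') := by
    rintro a a' b b' ⟨n, hn⟩ ⟨n', hn'⟩
    exact LocalTranslate.fst_eq_iff_snd_eq hf.injective (seq (max n n'))
      (hmono (le_max_left n n') hn) (hmono (le_max_right n n') hn')
  have hleft : ∀ a, ∃ b, Γ a b := fun a =>
    have ⟨b, hb⟩ := Order.sequenceOfCofinals.encode_mem _ 𝒟 (Sum.inl a)
    ⟨b, _, hb⟩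
  have hright : ∀ b, ∃ a, Γ a b := fun b =>
    have ⟨a, ha⟩ := Order.sequenceOfCofinals.encode_mem _ 𝒟 (Sum.inr b)
    ⟨a, _, ha⟩
  choose θ hθ using hleft
  have hbij : Function.Bijective θ :=
    ⟨fun a a' h => (hΓ (hθ a) (hθ a')).2 h,
      fun b => have ⟨a, ha⟩ := hright b; ⟨a, (hΓ (hθ a) ha).1 rfl⟩⟩
  refine ⟨Equiv.ofBijective θ hbij, fun n x => ?_⟩
  choose N hN using fun i => hθ (x i)
  obtain ⟨β, hβ, hβs⟩ := (seq (Finset.univ.sup N)).2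
  exact ⟨β, hβ, funext fun i => hβs _ (hmono (Finset.le_sup (Finset.mem_univ i)) (hN i))⟩

end BackAndForth

section Definability

open FirstOrder Language Structure

variable {L : FirstOrder.Language} {M : Type*} [L.Structure M]

theorem realize_comp_of_isAutPerm [L.IsRelational] {g : Equiv.Perm M} (hg : IsAutPerm L M g)
    {α : Type*} (φ : L.Formula α) (t : α → M) : φ.Realize (g ∘ t) ↔ φ.Realize t :=
  StrongHomClass.realize_formula (F := M ≃[L] M)
    { toEquiv := g, map_fun' := fun f => isEmptyElim f, map_rel' := fun R x => hg _ R x } φ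

theorem FoDef.orbitInvariant [L.IsRelational] {n : ℕ} {s : Set (Fin n → M)} (hs : FoDef L M s) :
    OrbitInvariant {g : Equiv.Perm M | IsAutPerm L M g} s := by
  obtain ⟨φ, rfl⟩ := hs
  rintro u _ ⟨g, hg, rfl⟩ hu
  exact (realize_comp_of_isAutPerm hg φ u).2 hu

variable (L) in
abbrev QfAtom (n : ℕ) : Type _ :=
  (Fin n × Fin n) ⊕ Σ p : (Σ k, L.Relations k), Fin p.1 → Fin n

def QfAtom.formula {n : ℕ} : QfAtom L n → L.Formula (Fin n)
  | .inl (i, j) => (Term.var i).equal (Term.var j)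
  | .inr ⟨⟨_, R⟩, ι⟩ => R.formula fun k => Term.var (ι k)

variable (L) in
open Classical in
noncomputable def qfTypeFormula [Finite (Σ k, L.Relations k)] {n : ℕ} (t : Fin n → M) :
    L.Formula (Fin n) :=
  Formula.iInf fun a : QfAtom L n => if a.formula.Realize t then a.formula else a.formula.not

theorem realize_qfTypeFormula [Finite (Σ k, L.Relations k)] {n : ℕ} {t s : Fin n → M} :
    (qfTypeFormula L t).Realize s ↔
      ∀ a : QfAtom L n, (a.formula.Realize s ↔ a.formula.Realize t) := by
  simp only [qfTypeFormula, Formula.realize_iInf]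
  refine forall_congr' fun a => ?_
  split_ifs with h <;> simp [h]

theorem sameOrb_iff_realize_qfTypeFormula [L.IsRelational] [Finite (Σ k, L.Relations k)]
    (hhomog : Homog L M) {n : ℕ} {t s : Fin n → M} :
    SameOrb {g : Equiv.Perm M | IsAutPerm L M g} t s ↔ (qfTypeFormula L t).Realize s := by
  refine ⟨?_, fun h => ?_⟩
  · rintro ⟨g, hg, rfl⟩
    exact realize_qfTypeFormula.2 fun a => realize_comp_of_isAutPerm hg a.formula t
  have heq : ∀ i j, t i = t j ↔ s i = s j := fun i j => by
    simpa [QfAtom.formula] using (realize_qfTypeFormula.1 h (.inl (i, j))).symm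
  have hrel : ∀ k (R : L.Relations k) (ι : Fin k → Fin n),
      RelMap R (t ∘ ι) ↔ RelMap R (s ∘ ι) := fun k R ι => by
    simpa [QfAtom.formula, Function.comp_def] using
      (realize_qfTypeFormula.1 h (.inr ⟨⟨k, R⟩, ι⟩)).symm
  -- the partial map `t i ↦ s i` is well defined because `t` and `s` satisfy the same equations
  have hfac : s.FactorsThrough t := fun i j hij => (heq i j).1 hij
  have hext : ∀ i, Function.extend t s id (t i) = s i := hfac.extend_apply id
  classical
  have hinj : Set.InjOn (Function.extend t s id) (Finset.univ.image t) := by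
    simp only [Finset.coe_image, Finset.coe_univ, Set.image_univ]
    rintro _ ⟨i, rfl⟩ _ ⟨j, rfl⟩ hij
    rw [hext, hext] at hij
    exact (heq i j).2 hij
  have hpres : ∀ k (R : L.Relations k) (w : Fin k → M), (∀ i, w i ∈ Finset.univ.image t) →
      (RelMap R w ↔ RelMap R (Function.extend t s id ∘ w)) := by
    intro k R w hw
    simp only [Finset.mem_image, Finset.mem_univ, true_and] at hw
    choose ι hι using hw
    obtain rfl : w = t ∘ ι := funext fun k => (hι k).symm
    simpa [Function.comp_def, hext] using hrel k R ι
  obtain ⟨g, hg, hgt⟩ := hhomog _ _ hinj hpres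
  exact ⟨g, hg, funext fun i => by rw [tAct, hgt _ (by simp), hext]⟩

theorem foDef_of_orbitInvariant [L.IsRelational] [Finite (Σ k, L.Relations k)]
    (hhomog : Homog L M) (holigo : Oligo {g : Equiv.Perm M | IsAutPerm L M g}) {n : ℕ}
    {s : Set (Fin n → M)} (hs : OrbitInvariant {g : Equiv.Perm M | IsAutPerm L M g} s) :
    FoDef L M s := by
  have := finite_orbitRel_quotient (G := autGroup L M) holigo n
  refine ⟨Formula.iSup fun q : {q : MulAction.orbitRel.Quotient (autGroup L M) (Fin n → M) //
    q.out ∈ s} => qfTypeFormula L q.1.out, Set.ext fun x => ?_⟩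
  simp only [Set.mem_ofPred_eq, Formula.realize_iSup, ← sameOrb_iff_realize_qfTypeFormula hhomog]
  refine ⟨fun hx => ?_, fun ⟨q, hq⟩ => hs _ _ hq q.2⟩
  have hout : SameOrb _ x (Quotient.mk _ x).out :=
    orbitRel_iff_sameOrb.1 (Quotient.mk_out (s := MulAction.orbitRel (autGroup L M) _) x)
  exact ⟨⟨_, hs _ _ hout hx⟩, SameOrb.symm hout⟩

end Definability

theorem optimal_presentations_foBiDefinable_general
    {Ω Ω' : Type} [Countable Ω] [Countable Ω']
    (L₁ L₂ τ : FirstOrder.Language) [L₁.IsRelational] [L₂.IsRelational]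
    [Finite (Σ n : ℕ, L₁.Relations n)] [Finite (Σ n : ℕ, L₂.Relations n)]
    [L₁.Structure Ω] [L₂.Structure Ω']
    (hAhomog : Homog L₁ Ω) (hBhomog : Homog L₂ Ω')
    (hAoligo : Oligo {g : Equiv.Perm Ω | IsAutPerm L₁ Ω g})
    (hBoligo : Oligo {g : Equiv.Perm Ω' | IsAutPerm L₂ Ω' g})
    -- canonisation property (a consequence of the Ramsey property): the closure of
    -- `{β ∘ f ∘ α | α ∈ Aut(A), β ∈ Aut(B)}` in the topology of pointwise convergence
    -- contains an (A,B)-canonical function, and symmetrically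
    (hcanonAB : ∀ f : Ω → Ω', ∃ f' : Ω → Ω',
      f' ∈ @closure (Ω → Ω') (FnTop Ω Ω')
        {h | ∃ (α : Equiv.Perm Ω) (β : Equiv.Perm Ω'),
          IsAutPerm L₁ Ω α ∧ IsAutPerm L₂ Ω' β ∧ h = ⇑β ∘ f ∘ ⇑α} ∧
      Canonical {g : Equiv.Perm Ω | IsAutPerm L₁ Ω g}
        {g : Equiv.Perm Ω' | IsAutPerm L₂ Ω' g} f')
    (hcanonBA : ∀ f : Ω' → Ω, ∃ f' : Ω' → Ω,
      f' ∈ @closure (Ω' → Ω) (FnTop Ω' Ω)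
        {h | ∃ (α : Equiv.Perm Ω) (β : Equiv.Perm Ω'),
          IsAutPerm L₁ Ω α ∧ IsAutPerm L₂ Ω' β ∧ h = ⇑α ∘ f ∘ ⇑β} ∧
      Canonical {g : Equiv.Perm Ω' | IsAutPerm L₂ Ω' g}
        {g : Equiv.Perm Ω | IsAutPerm L₁ Ω g} f')
    (SC : τ.Structure Ω) (SD : τ.Structure Ω')
    -- `C` is a first-order reduct of `A`, `D` of `B`
    (hCreduct : ∀ (m : ℕ) (R : τ.Relations m) (g : Equiv.Perm Ω), IsAutPerm L₁ Ω g →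
      ∀ t : Fin m → Ω, relI SC R t → relI SC R (tAct g t))
    (hDreduct : ∀ (m : ℕ) (R : τ.Relations m) (g : Equiv.Perm Ω'), IsAutPerm L₂ Ω' g →
      ∀ t : Fin m → Ω', relI SD R t → relI SD R (tAct g t))
    -- `C` is optimally presented over `A`: the range of every endomorphism of `C`
    -- meets every `Aut(A)`-orbit
    (hCopt : ∀ e : Ω → Ω,
      (∀ (m : ℕ) (R : τ.Relations m) (t : Fin m → Ω),
        relI SC R t → relI SC R (fun i => e (t i))) →
      ∀ (m : ℕ) (t : Fin m → Ω), ∃ s : Fin m → Ω,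
        SameOrb {g : Equiv.Perm Ω | IsAutPerm L₁ Ω g} t (fun i => e (s i)))
    -- `D` is optimally presented over `B`
    (hDopt : ∀ e : Ω' → Ω',
      (∀ (m : ℕ) (R : τ.Relations m) (t : Fin m → Ω'),
        relI SD R t → relI SD R (fun i => e (t i))) →
      ∀ (m : ℕ) (t : Fin m → Ω'), ∃ s : Fin m → Ω',
        SameOrb {g : Equiv.Perm Ω' | IsAutPerm L₂ Ω' g} t (fun i => e (s i)))
    -- `C` and `D` are homomorphically equivalent
    (hhom : ∃ h : Ω → Ω', ∀ (m : ℕ) (R : τ.Relations m) (t : Fin m → Ω),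
      relI SC R t → relI SD R (fun i => h (t i)))
    (hhom' : ∃ h : Ω' → Ω, ∀ (m : ℕ) (R : τ.Relations m) (t : Fin m → Ω'),
      relI SD R t → relI SC R (fun i => h (t i))) :
    -- conclusion: some isomorphism `C → D` is a fo-bi-definition of `A` and `B`
    ∃ θ : Ω ≃ Ω',
      (∀ (m : ℕ) (R : τ.Relations m) (t : Fin m → Ω),
        relI SC R t ↔ relI SD R (fun i => θ (t i))) ∧
      (∀ (n : ℕ) (s : Set (Fin n → Ω)),
        FoDef L₁ Ω s → FoDef L₂ Ω' ((fun t => ⇑θ ∘ t) '' s)) ∧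
      (∀ (n : ℕ) (s : Set (Fin n → Ω')),
        FoDef L₂ Ω' s → FoDef L₁ Ω ((fun t => ⇑θ.symm ∘ t) '' s)) := by
  obtain ⟨h, hh⟩ := hhom
  obtain ⟨h', hh'⟩ := hhom'
  obtain ⟨f, hf_cl, hf_can⟩ := hcanonAB h
  obtain ⟨g, hg_cl, hg_can⟩ := hcanonBA h'
  have hC : IsPreservedBy SC {g | IsAutPerm L₁ Ω g} := hCreduct
  have hD : IsPreservedBy SD {g | IsAutPerm L₂ Ω' g} := hDreduct
  have hf : IsRelHom SC SD f := IsRelHom.of_mem_closure (by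
    rintro _ ⟨α, β, hα, hβ, rfl⟩
    exact ((hD.isRelHom hβ).comp hh).comp (hC.isRelHom hα)) hf_cl
  have hg : IsRelHom SD SC g := IsRelHom.of_mem_closure (by
    rintro _ ⟨α, β, hα, hβ, rfl⟩
    exact ((hC.isRelHom hα).comp hh').comp (hD.isRelHom hβ)) hg_cl
  have hgf : RangeMeetsOrbits (autGroup L₁ Ω : Set (Equiv.Perm Ω)) (g ∘ f) :=
    hCopt _ (hg.comp hf)
  have hemb : IsOrbitEmbedding (autGroup L₁ Ω : Set (Equiv.Perm Ω)) (autGroup L₂ Ω') f :=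
    fun m t s => ⟨hf_can m t s, fun hts =>
      (hg_can.comp hf_can).sameOrb_of_sameOrb_comp hAoligo hgf (hg_can m _ _ hts)⟩
  have hrefl : ∀ m (R : τ.Relations m) t, relI SD R (f ∘ t) → relI SC R t := fun m R t hR =>
    (hg_can.comp hf_can).pred_of_pred_comp hAoligo hgf (relI SC R)
      (fun _ _ => hC.relI_of_sameOrb) ((hg.comp hf) m R) (hg m R _ hR)
  have hfrange := RangeMeetsOrbits.of_comp (hDopt _ (hf.comp hg))
  obtain ⟨θ, hθ⟩ := hemb.exists_equiv_sameOrb hfrange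
  have hθemb := hemb.of_sameOrb hθ
  refine ⟨θ, fun m R t => ⟨fun ht => hD.relI_of_sameOrb (hθ m t) (hf m R t ht),
    fun ht => hrefl m R t (hD.relI_of_sameOrb (hθ m t).symm ht)⟩,
    fun n s hs => ?_, fun n s hs => ?_⟩
  · exact foDef_of_orbitInvariant hBhomog hBoligo
      (hθemb.orbitInvariant_image hs.orbitInvariant)
  · exact foDef_of_orbitInvariant hAhomog hAoligo
      (hθemb.symm.orbitInvariant_image hs.orbitInvariant)

/-- Homomorphically equivalent, optimally presented reducts of homogeneous
ω-categorical Ramsey structures (here: structures with the canonisation property)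
in finite relational languages are isomorphic via a fo-bi-definition of the
ground structures. -/
theorem optimal_presentations_foBiDefinable
    {Ω Ω' : Type} [Countable Ω] [Infinite Ω] [Countable Ω'] [Infinite Ω']
    (L₁ L₂ τ : FirstOrder.Language) [L₁.IsRelational] [L₂.IsRelational] [τ.IsRelational]
    [Finite (Σ n : ℕ, L₁.Relations n)] [Finite (Σ n : ℕ, L₂.Relations n)]
    [L₁.Structure Ω] [L₂.Structure Ω']
    (hAhomog : Homog L₁ Ω) (hBhomog : Homog L₂ Ω')
    (hAoligo : Oligo {g : Equiv.Perm Ω | IsAutPerm L₁ Ω g})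
    (hBoligo : Oligo {g : Equiv.Perm Ω' | IsAutPerm L₂ Ω' g})
    -- canonisation property (a consequence of the Ramsey property): the closure of
    -- `{β ∘ f ∘ α | α ∈ Aut(A), β ∈ Aut(B)}` in the topology of pointwise convergence
    -- contains an (A,B)-canonical function, and symmetrically
    (hcanonAB : ∀ f : Ω → Ω', ∃ f' : Ω → Ω',
      f' ∈ @closure (Ω → Ω') (FnTop Ω Ω')
        {h | ∃ (α : Equiv.Perm Ω) (β : Equiv.Perm Ω'),
          IsAutPerm L₁ Ω α ∧ IsAutPerm L₂ Ω' β ∧ h = ⇑β ∘ f ∘ ⇑α} ∧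
      Canonical {g : Equiv.Perm Ω | IsAutPerm L₁ Ω g}
        {g : Equiv.Perm Ω' | IsAutPerm L₂ Ω' g} f')
    (hcanonBA : ∀ f : Ω' → Ω, ∃ f' : Ω' → Ω,
      f' ∈ @closure (Ω' → Ω) (FnTop Ω' Ω)
        {h | ∃ (α : Equiv.Perm Ω) (β : Equiv.Perm Ω'),
          IsAutPerm L₁ Ω α ∧ IsAutPerm L₂ Ω' β ∧ h = ⇑α ∘ f ∘ ⇑β} ∧
      Canonical {g : Equiv.Perm Ω' | IsAutPerm L₂ Ω' g}
        {g : Equiv.Perm Ω | IsAutPerm L₁ Ω g} f')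
    (SC : τ.Structure Ω) (SD : τ.Structure Ω')
    -- `C` is a first-order reduct of `A`, `D` of `B`
    (hCreduct : ∀ (m : ℕ) (R : τ.Relations m) (g : Equiv.Perm Ω), IsAutPerm L₁ Ω g →
      ∀ t : Fin m → Ω, relI SC R t → relI SC R (tAct g t))
    (hDreduct : ∀ (m : ℕ) (R : τ.Relations m) (g : Equiv.Perm Ω'), IsAutPerm L₂ Ω' g →
      ∀ t : Fin m → Ω', relI SD R t → relI SD R (tAct g t))
    -- `C` is optimally presented over `A`: the range of every endomorphism of `C`
    -- meets every `Aut(A)`-orbit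
    (hCopt : ∀ e : Ω → Ω,
      (∀ (m : ℕ) (R : τ.Relations m) (t : Fin m → Ω),
        relI SC R t → relI SC R (fun i => e (t i))) →
      ∀ (m : ℕ) (t : Fin m → Ω), ∃ s : Fin m → Ω,
        SameOrb {g : Equiv.Perm Ω | IsAutPerm L₁ Ω g} t (fun i => e (s i)))
    -- `D` is optimally presented over `B`
    (hDopt : ∀ e : Ω' → Ω',
      (∀ (m : ℕ) (R : τ.Relations m) (t : Fin m → Ω'),
        relI SD R t → relI SD R (fun i => e (t i))) →
      ∀ (m : ℕ) (t : Fin m → Ω'), ∃ s : Fin m → Ω',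
        SameOrb {g : Equiv.Perm Ω' | IsAutPerm L₂ Ω' g} t (fun i => e (s i)))
    -- `C` and `D` are homomorphically equivalent
    (hhom : ∃ h : Ω → Ω', ∀ (m : ℕ) (R : τ.Relations m) (t : Fin m → Ω),
      relI SC R t → relI SD R (fun i => h (t i)))
    (hhom' : ∃ h : Ω' → Ω, ∀ (m : ℕ) (R : τ.Relations m) (t : Fin m → Ω'),
      relI SD R t → relI SC R (fun i => h (t i))) :
    -- conclusion: some isomorphism `C → D` is a fo-bi-definition of `A` and `B`
    ∃ θ : Ω ≃ Ω',
      (∀ (m : ℕ) (R : τ.Relations m) (t : Fin m → Ω),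
        relI SC R t ↔ relI SD R (fun i => θ (t i))) ∧
      (∀ (n : ℕ) (s : Set (Fin n → Ω)),
        FoDef L₁ Ω s → FoDef L₂ Ω' ((fun t => ⇑θ ∘ t) '' s)) ∧
      (∀ (n : ℕ) (s : Set (Fin n → Ω')),
        FoDef L₂ Ω' s → FoDef L₁ Ω ((fun t => ⇑θ.symm ∘ t) '' s)) :=
  optimal_presentations_foBiDefinable_general L₁ L₂ τ hAhomog hBhomog hAoligo hBoligo hcanonAB
    hcanonBA SC SD hCreduct hDreduct hCopt hDopt hhom hhom'
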